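/- arXiv:1104.0449 — 6 statements merged into one kernel-verified Lean document; each statement's English description precedes it below -/
import Mathlib

section
/- With the setup of the compact-real-form inner product on a complex semisimple Lie algebra, if Λ₊ ∈ V₂ = {x : [Λ₀,x] = 2x} with Λ₋ = −c(Λ₊), then ‖[Λ₊,Λ₋]‖² / ‖Λ₊‖⁴ ≥ 4/‖Λ₀‖² (the coercive condition). Equivalently, ‖[Λ₊,Λ₋]‖²·‖Λ₀‖² ≥ 4‖Λ₊‖⁴. -/
/-- The coercive condition: for `Λ₊ ∈ V₂ = {x : [Λ₀,x] = 2x}` and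
`Λ₋ = −c(Λ₊)`, one has `‖[Λ₊,Λ₋]‖²·‖Λ₀‖² ≥ 4‖Λ₊‖⁴`, where `‖X‖² = ⟨X|X⟩` for the
compact-real-form inner product `⟨X|Y⟩ = −Re κ(c X, Y)`. -/
theorem stmt2
    (L : Type*) [LieRing L] [LieAlgebra ℂ L] [Module.Finite ℂ L]
    [LieAlgebra.IsSemisimple ℂ L]
    (c : L → L)
    (hc_add : ∀ x y : L, c (x + y) = c x + c y)
    (hc_smul : ∀ (a : ℂ) (x : L), c (a • x) = (starRingEnd ℂ a) • c x)
    (hc_bracket : ∀ x y : L, c ⁅x, y⁆ = ⁅c x, c y⁆)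
    (hc_inv : ∀ x : L, c (c x) = x)
    (hcompact : ∀ x : L, c x = x → x ≠ 0 → (killingForm ℂ L x x).re < 0)
    (B : L → L → ℝ)
    (hB : ∀ X Y : L, B X Y = -(killingForm ℂ L (c X) Y).re)
    (Λ₀ Λp Λm : L)
    (hΛ₀c : c Λ₀ = -Λ₀)
    (hV2 : ⁅Λ₀, Λp⁆ = (2 : ℂ) • Λp)
    (hΛm : Λm = -(c Λp)) :
    B ⁅Λp, Λm⁆ ⁅Λp, Λm⁆ * B Λ₀ Λ₀ ≥ 4 * (B Λp Λp) ^ 2 := by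
  set K : L → L → ℂ := fun x y => killingForm ℂ L x y with hKdef
  have ksymm : ∀ x y : L, K x y = K y x := fun x y => LieModule.traceForm_comm ℂ L L x y
  have kinv : ∀ x y z : L, K ⁅x, y⁆ z = K x ⁅y, z⁆ := fun x y z =>
    LieModule.traceForm_apply_lie_apply ℂ L L x y z
  have kaddl : ∀ x y z : L, K (x + y) z = K x z + K y z := by
    intro x y z; simp [hKdef]
  have kaddr : ∀ x y z : L, K x (y + z) = K x y + K x z := by
    intro x y z; simp [hKdef]
  have ksmull : ∀ (a : ℂ) (x y : L), K (a • x) y = a * K x y := by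
    intro a x y; simp [hKdef]
  have ksmulr : ∀ (a : ℂ) (x y : L), K x (a • y) = a * K x y := by
    intro a x y; simp [hKdef]
  have knegl : ∀ x y : L, K (-x) y = -K x y := by
    intro x y; simp [hKdef]
  have hc_neg : ∀ x : L, c (-x) = -(c x) := by
    intro x
    have := hc_smul (-1) x
    simpa using this
  have hc_sub : ∀ x y : L, c (x - y) = c x - c y := by
    intro x y
    rw [sub_eq_add_neg, hc_add, hc_neg, sub_eq_add_neg]
  have hconj2' : (starRingEnd ℂ) (2 : ℂ) = 2 := by
    rw [show (2 : ℂ) = ((2 : ℝ) : ℂ) by norm_num, Complex.conj_ofReal]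
  have hconj2 : (starRingEnd ℂ) ((2 : ℂ)⁻¹) = (2 : ℂ)⁻¹ := by
    rw [map_inv₀, hconj2']
  -- positivity of B
  have hpos : ∀ x : L, 0 ≤ B x x := by
    intro x
    set a : L := ((2 : ℂ)⁻¹) • (x + c x) with ha_def
    set b : L := ((2 : ℂ)⁻¹) • (x - c x) with hb_def
    have hca : c a = a := by
      rw [ha_def, hc_smul, hc_add, hc_inv, hconj2, add_comm]
    have hcb : c b = -b := by
      rw [hb_def, hc_smul, hc_sub, hc_inv]
      rw [hconj2]
      rw [← smul_neg, neg_sub]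
    have hx : x = a + b := by
      rw [ha_def, hb_def, ← smul_add]
      have : x + c x + (x - c x) = (2 : ℂ) • x := by
        rw [two_smul]; abel
      rw [this, smul_smul]
      norm_num
    have hcx : c x = a - b := by
      rw [hx, hc_add, hca, hcb, sub_eq_add_neg]
    have hBxx : B x x = -(K a a).re + (K b b).re := by
      rw [hB]
      have : killingForm ℂ L (c x) x = K a a - K b b := by
        show K (c x) x = _
        rw [hcx]
        conv_lhs => rw [hx]
        rw [sub_eq_add_neg, kaddl, kaddr, kaddr, knegl, knegl, ksymm b a]
        ring
      rw [this]
      simp only [Complex.sub_re, neg_sub]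
      ring
    rw [hBxx]
    have h1 : 0 ≤ -(K a a).re := by
      rcases eq_or_ne a 0 with h | h
      · simp [hKdef, h, K]
      · have := hcompact a hca h
        simp only [hKdef] at this ⊢
        linarith
    have h2 : 0 ≤ (K b b).re := by
      rcases eq_or_ne b 0 with h | h
      · simp [hKdef, h, K]
      · set u : L := Complex.I • b with hu_def
        have hcu : c u = u := by
          rw [hu_def, hc_smul, hcb, smul_neg]
          rw [show (starRingEnd ℂ) Complex.I = -Complex.I by simp]
          rw [neg_smul, neg_neg]
        have hu0 : u ≠ 0 := by
          rw [hu_def]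
          exact smul_ne_zero Complex.I_ne_zero h
        have := hcompact u hcu hu0
        have huu : killingForm ℂ L u u = -K b b := by
          show K u u = _
          rw [hu_def, ksmull, ksmulr, ← mul_assoc, Complex.I_mul_I]
          ring
        rw [huu] at this
        simp only [Complex.neg_re] at this
        linarith
    linarith
  -- key algebra
  have hcΛp : c Λp = -Λm := by rw [hΛm, neg_neg]
  have hcΛm : c Λm = -Λp := by rw [hΛm, hc_neg, hc_inv]
  set Z : L := ⁅Λp, Λm⁆ with hZ_def
  have hcZ : c Z = -Z := by
    rw [hZ_def, hc_bracket, hcΛp, hcΛm, neg_lie, lie_neg, neg_neg, ← lie_skew]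
  -- bracket of Λ₀ with Λm
  have hbr : ⁅Λm, Λ₀⁆ = (2 : ℂ) • Λm := by
    have h1 : c ⁅Λ₀, Λp⁆ = ⁅Λ₀, Λm⁆ := by
      rw [hc_bracket, hΛ₀c, hcΛp, neg_lie, lie_neg, neg_neg]
    have h2 : c ((2 : ℂ) • Λp) = -((2 : ℂ) • Λm) := by
      rw [hc_smul, hcΛp, smul_neg, hconj2']
    have h3 : ⁅Λ₀, Λm⁆ = -((2 : ℂ) • Λm) := by rw [← h1, hV2, h2]
    rw [← lie_skew, h3, neg_neg]
  have hKZΛ₀ : K Z Λ₀ = 2 * K Λp Λm := by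
    rw [hZ_def, kinv, hbr, ksmulr]
  have hBpp : B Λp Λp = (K Λp Λm).re := by
    rw [hB, show killingForm ℂ L (c Λp) Λp = K (c Λp) Λp from rfl, hcΛp, knegl, ksymm]
    simp
  have hBZΛ₀ : (K Z Λ₀).re = 2 * B Λp Λp := by
    rw [hKZΛ₀, hBpp]
    simp [Complex.mul_re]
  -- B-values via K
  have hBZZ : B Z Z = (K Z Z).re := by
    rw [hB, show killingForm ℂ L (c Z) Z = K (c Z) Z from rfl, hcZ, knegl]
    simp
  have hBΛ₀Λ₀ : B Λ₀ Λ₀ = (K Λ₀ Λ₀).re := by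
    rw [hB, show killingForm ℂ L (c Λ₀) Λ₀ = K (c Λ₀) Λ₀ from rfl, hΛ₀c, knegl]
    simp
  -- quadratic inequality
  have hquad : ∀ t : ℝ, 0 ≤ B Λ₀ Λ₀ * (t * t) + (4 * B Λp Λp) * t + B Z Z := by
    intro t
    have hcW : c (Z + (t : ℂ) • Λ₀) = -(Z + (t : ℂ) • Λ₀) := by
      rw [hc_add, hc_smul, hcZ, hΛ₀c, smul_neg]
      rw [show (starRingEnd ℂ) (t : ℂ) = (t : ℂ) by simp]
      rw [neg_add]
    have hBW : B (Z + (t : ℂ) • Λ₀) (Z + (t : ℂ) • Λ₀)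
        = (K (Z + (t : ℂ) • Λ₀) (Z + (t : ℂ) • Λ₀)).re := by
      rw [hB, show killingForm ℂ L (c (Z + (t : ℂ) • Λ₀)) (Z + (t : ℂ) • Λ₀)
          = K (c (Z + (t : ℂ) • Λ₀)) (Z + (t : ℂ) • Λ₀) from rfl, hcW, knegl]
      simp
    have hexp : K (Z + (t : ℂ) • Λ₀) (Z + (t : ℂ) • Λ₀)
        = K Z Z + (t : ℂ) * (2 * (2 * K Λp Λm)) + (t : ℂ) * (t : ℂ) * K Λ₀ Λ₀ := by
      rw [kaddl, kaddr, kaddr, ksmull, ksmull, ksmulr, ksmulr]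
      rw [ksymm Λ₀ Z, hKZΛ₀]
      ring
    have := hpos (Z + (t : ℂ) • Λ₀)
    rw [hBW, hexp] at this
    simp only [Complex.add_re, Complex.mul_re, Complex.ofReal_re, Complex.ofReal_im,
      Complex.mul_im, Complex.re_ofNat, Complex.im_ofNat] at this
    rw [hBZZ, hBΛ₀Λ₀, hBpp]
    ring_nf at this ⊢
    linarith
  have hdis := discrim_le_zero hquad
  rw [discrim] at hdis
  rw [ge_iff_le, show B ⁅Λp, Λm⁆ ⁅Λp, Λm⁆ = B Z Z from rfl]
  nlinarith [hdis]
end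

section
/- Define the operator A on g by A := ½ ad_{Ω₊}∘(ad_{Ω₋} + ad_{Ω₊}∘c) + ½(ad_{Ω₀} − ad_{Λ₀}), where {Ω₀,Ω₊,Ω₋} is an sl₂-triple with Ω₋ = −c(Ω₊), c(Ω₀) = −Ω₀, and Λ₀ satisfies c(Λ₀) = −Λ₀. Then A is symmetric with respect to the real inner product ⟨X|Y⟩ = −Re κ(c(X),Y): ⟨X | AY⟩ = ⟨AX | Y⟩ for all X, Y ∈ g. -/
/-!
Invariance of the Killing form, `κ(cX, [Z, Y]) = κ([cX, Z], Y) = κ(c[−cZ, X], Y)`, shows that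
for `⟨X|Y⟩ = −Re κ(cX, Y)` the adjoint of `ad Z` is `ad (−cZ)`. The conjugation `c` is itself
self-adjoint: as a real-linear Lie automorphism it preserves the real trace `2 Re κ` of
`ad U ∘ ad V`, so `Re κ(cU, cV) = Re κ(U, V)`. Hence `ad Ω₊ ad Ω₋`, `ad Ω₀` and `ad Λ₀` are
symmetric, and so is `ad Ω₊ ad Ω₊ c`, whose adjoint `c ad Ω₋ ad Ω₋` equals it because
`c ∘ ad Ω₋ = −ad Ω₊ ∘ c`. The operator `A` is a real combination of these four.
-/

theorem LinearMap.trace_restrictScalars {R A M : Type*} [CommRing R] [CommRing A] [Algebra R A]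
    [Module.Free R A] [Module.Finite R A] [AddCommGroup M] [Module A M] [Module R M]
    [IsScalarTower R A M] [Module.Free A M] [Module.Finite A M] (f : M →ₗ[A] M) :
    trace R M (f.restrictScalars R) = Algebra.trace R A (trace A M f) := by
  classical
  let bA := Module.Free.chooseBasis R A
  let bM := Module.Free.chooseBasis A M
  rw [trace_eq_matrix_trace R (bA.smulTower' bM), restrictScalars_toMatrix,
    trace_eq_matrix_trace A bM, Matrix.trace, Matrix.trace, map_sum, Fintype.sum_prod_type]
  simp [Algebra.trace_eq_matrix_trace bA, Matrix.trace]

namespace LieAlgebra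

open LinearMap (IsAdjointPair)

variable {L : Type*} [LieRing L] [LieAlgebra ℂ L]

theorem re_killingForm_map [Module.Finite ℂ L] (σ : L ≃ₗ[ℝ] L)
    (hσ_lie : ∀ x y : L, σ ⁅x, y⁆ = ⁅σ x, σ y⁆) (x y : L) :
    (killingForm ℂ L (σ x) (σ y)).re = (killingForm ℂ L x y).re := by
  have hconj : (ad ℂ L (σ x) ∘ₗ ad ℂ L (σ y)).restrictScalars ℝ =
      σ.conj ((ad ℂ L x ∘ₗ ad ℂ L y).restrictScalars ℝ) := by
    ext z
    simp [LinearEquiv.conj_apply, hσ_lie]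
  have h := congrArg (LinearMap.trace ℝ L) hconj
  rw [LinearMap.trace_conj', LinearMap.trace_restrictScalars, LinearMap.trace_restrictScalars,
    Algebra.trace_complex_apply, Algebra.trace_complex_apply] at h
  simpa [killingForm_apply_apply] using h

noncomputable def conjKillingForm (σ : L →ₗ[ℝ] L) : LinearMap.BilinForm ℝ L :=
  LinearMap.mk₂ ℝ (fun x y => -(killingForm ℂ L (σ x) y).re)
    (by intros; simp [add_comm]) (by intros; simp) (by intros; simp [add_comm]) (by intros; simp)

@[simp]
theorem conjKillingForm_apply (σ : L →ₗ[ℝ] L) (x y : L) :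
    conjKillingForm σ x y = -(killingForm ℂ L (σ x) y).re :=
  rfl

variable {σ : L →ₗ[ℝ] L}

theorem isAdjointPair_ad_neg_map (hσ_lie : ∀ x y : L, σ ⁅x, y⁆ = ⁅σ x, σ y⁆) (z : L) :
    IsAdjointPair (conjKillingForm σ) (conjKillingForm σ)
      ((ad ℂ L z).restrictScalars ℝ) ((ad ℂ L (-σ z)).restrictScalars ℝ) := by
  intro x y
  change -(killingForm ℂ L (σ ⁅z, x⁆) y).re = -(killingForm ℂ L (σ x) ⁅-σ z, y⁆).re
  rw [hσ_lie, ← LieModule.traceForm_apply_lie_apply, lie_neg, lie_skew]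

theorem isAdjointPair_ad_of_map_eq_neg (hσ_lie : ∀ x y : L, σ ⁅x, y⁆ = ⁅σ x, σ y⁆) {z : L}
    (hz : σ z = -z) :
    IsAdjointPair (conjKillingForm σ) (conjKillingForm σ)
      ((ad ℂ L z).restrictScalars ℝ) ((ad ℂ L z).restrictScalars ℝ) := by
  simpa [hz] using isAdjointPair_ad_neg_map hσ_lie z

theorem isAdjointPair_ad_mul_ad_neg_map (hσ_lie : ∀ x y : L, σ ⁅x, y⁆ = ⁅σ x, σ y⁆)
    (hσ_inv : Function.Involutive σ) (z : L) :
    IsAdjointPair (conjKillingForm σ) (conjKillingForm σ)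
      ((ad ℂ L z).restrictScalars ℝ * (ad ℂ L (-σ z)).restrictScalars ℝ)
      ((ad ℂ L z).restrictScalars ℝ * (ad ℂ L (-σ z)).restrictScalars ℝ) := by
  have h := (isAdjointPair_ad_neg_map hσ_lie z).mul (isAdjointPair_ad_neg_map hσ_lie (-σ z))
  rwa [map_neg σ, neg_neg, hσ_inv z] at h

variable [Module.Finite ℂ L]

theorem isAdjointPair_conjKillingForm_self (hσ_lie : ∀ x y : L, σ ⁅x, y⁆ = ⁅σ x, σ y⁆)
    (hσ_inv : Function.Involutive σ) :
    IsAdjointPair (conjKillingForm σ) (conjKillingForm σ) σ σ := by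
  intro x y
  simpa [hσ_inv x] using (re_killingForm_map (.ofInvolutive σ hσ_inv) hσ_lie x y).symm

theorem isAdjointPair_ad_mul_ad_mul_self (hσ_lie : ∀ x y : L, σ ⁅x, y⁆ = ⁅σ x, σ y⁆)
    (hσ_inv : Function.Involutive σ) (z : L) :
    IsAdjointPair (conjKillingForm σ) (conjKillingForm σ)
      ((ad ℂ L z).restrictScalars ℝ * (ad ℂ L z).restrictScalars ℝ * σ)
      ((ad ℂ L z).restrictScalars ℝ * (ad ℂ L z).restrictScalars ℝ * σ) := by
  have h := ((isAdjointPair_ad_neg_map hσ_lie z).mul (isAdjointPair_ad_neg_map hσ_lie z)).mul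
    (isAdjointPair_conjKillingForm_self hσ_lie hσ_inv)
  have hcomm : σ * ((ad ℂ L (-σ z)).restrictScalars ℝ * (ad ℂ L (-σ z)).restrictScalars ℝ) =
      (ad ℂ L z).restrictScalars ℝ * (ad ℂ L z).restrictScalars ℝ * σ := by
    ext x
    simp [hσ_lie, hσ_inv z]
  rwa [hcomm] at h

end LieAlgebra

open LieAlgebra

theorem stmt11_general
    (L : Type*) [LieRing L] [LieAlgebra ℂ L] [Module.Finite ℂ L]
    (c : L → L)
    (hc_add : ∀ x y : L, c (x + y) = c x + c y)
    (hc_smul : ∀ (a : ℂ) (x : L), c (a • x) = (starRingEnd ℂ a) • c x)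
    (hc_bracket : ∀ x y : L, c ⁅x, y⁆ = ⁅c x, c y⁆)
    (hc_inv : ∀ x : L, c (c x) = x)
    (B : L → L → ℝ)
    (hB : ∀ X Y : L, B X Y = -(killingForm ℂ L (c X) Y).re)
    (Λ₀ Ω₀ Ωp Ωm : L)
    (hΩm : Ωm = -(c Ωp))
    (hΩ₀c : c Ω₀ = -Ω₀)
    (hΛ₀c : c Λ₀ = -Λ₀)
    (A : L → L)
    (hA : ∀ X : L, A X =
      (1 / 2 : ℂ) • ⁅Ωp, ⁅Ωm, X⁆ + ⁅Ωp, c X⁆⁆ +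
        (1 / 2 : ℂ) • (⁅Ω₀, X⁆ - ⁅Λ₀, X⁆)) :
    ∀ X Y : L, B X (A Y) = B (A X) Y := by
  subst hΩm
  let σ : L →ₗ[ℝ] L :=
    { toFun := c
      map_add' := hc_add
      map_smul' := fun r x => by simpa using hc_smul r x }
  have hσ_lie : ∀ x y : L, σ ⁅x, y⁆ = ⁅σ x, σ y⁆ := hc_bracket
  have hσ_inv : Function.Involutive σ := hc_inv
  let adℝ (z : L) : Module.End ℝ L := (ad ℂ L z).restrictScalars ℝ
  let A' : Module.End ℝ L := (1 / 2 : ℝ) • (adℝ Ωp * adℝ (-σ Ωp) + adℝ Ωp * adℝ Ωp * σ) +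
    (1 / 2 : ℝ) • (adℝ Ω₀ - adℝ Λ₀)
  have hA' : ∀ X, A X = A' X := by
    intro X
    simp only [A', adℝ, LinearMap.add_apply, LinearMap.sub_apply, LinearMap.smul_apply,
      Module.End.mul_apply, LinearMap.restrictScalars_apply, ad_apply]
    rw [hA, lie_add]
    simp only [σ, LinearMap.coe_mk, AddHom.coe_mk, ← Complex.coe_smul]
    norm_num
  have hA'_symm : LinearMap.IsAdjointPair (conjKillingForm σ) (conjKillingForm σ) A' A' :=
    (((isAdjointPair_ad_mul_ad_neg_map hσ_lie hσ_inv Ωp).add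
      (isAdjointPair_ad_mul_ad_mul_self hσ_lie hσ_inv Ωp)).smul _).add
      (((isAdjointPair_ad_of_map_eq_neg hσ_lie hΩ₀c).sub
        (isAdjointPair_ad_of_map_eq_neg hσ_lie hΛ₀c)).smul _)
  intro X Y
  rw [hB, hB, hA', hA']
  exact (hA'_symm X Y).symm

/-- The operator
`A := ½ ad_{Ω₊}∘(ad_{Ω₋} + ad_{Ω₊}∘c) + ½(ad_{Ω₀} − ad_{Λ₀})`,
where `{Ω₀,Ω₊,Ω₋}` is an sl₂-triple with `Ω₋ = −c(Ω₊)`, `c(Ω₀) = −Ω₀`,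
`c(Λ₀) = −Λ₀`, is symmetric for the compact-real-form inner product
`⟨X|Y⟩ = −Re κ(c X, Y)`: `⟨X | A Y⟩ = ⟨A X | Y⟩` for all `X, Y`. -/
theorem stmt11
    (L : Type*) [LieRing L] [LieAlgebra ℂ L] [Module.Finite ℂ L]
    [LieAlgebra.IsSemisimple ℂ L]
    (c : L → L)
    (hc_add : ∀ x y : L, c (x + y) = c x + c y)
    (hc_smul : ∀ (a : ℂ) (x : L), c (a • x) = (starRingEnd ℂ a) • c x)
    (hc_bracket : ∀ x y : L, c ⁅x, y⁆ = ⁅c x, c y⁆)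
    (hc_inv : ∀ x : L, c (c x) = x)
    (B : L → L → ℝ)
    (hB : ∀ X Y : L, B X Y = -(killingForm ℂ L (c X) Y).re)
    (Λ₀ Ω₀ Ωp Ωm : L)
    (hΩm : Ωm = -(c Ωp))
    (hΩ₀c : c Ω₀ = -Ω₀)
    (hΛ₀c : c Λ₀ = -Λ₀)
    (h1 : ⁅Ω₀, Ωp⁆ = (2 : ℂ) • Ωp)
    (h2 : ⁅Ω₀, Ωm⁆ = (-2 : ℂ) • Ωm)
    (h3 : ⁅Ωp, Ωm⁆ = Ω₀)
    (A : L → L)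
    (hA : ∀ X : L, A X =
      (1 / 2 : ℂ) • ⁅Ωp, ⁅Ωm, X⁆ + ⁅Ωp, c X⁆⁆ +
        (1 / 2 : ℂ) • (⁅Ω₀, X⁆ - ⁅Λ₀, X⁆)) :
    ∀ X Y : L, B X (A Y) = B (A X) Y :=
  stmt11_general L c hc_add hc_smul hc_bracket hc_inv B hB Λ₀ Ω₀ Ωp Ωm hΩm hΩ₀c hΛ₀c A hA
end

section
/- For Λ₊ ∈ V₂, define the vertical space vert_{Λ₊} := {[a, Λ₊] : a ∈ g₀^{Λ₀}} ⊂ T_{Λ₊}V₂ and the map YM1(Λ₊, Γ₊) := [Λ₊, c(Γ₊)] + [c(Λ₊), Γ₊] ∈ g₀^{Λ₀}. Then the orthogonal complement of vert_{Λ₊} in T_{Λ₊}V₂ (with respect to the compact-real-form inner product) equals {Γ₊ ∈ T_{Λ₊}V₂ : YM1(Λ₊, Γ₊) = 0}. That is, Γ₊ ⊥ [a,Λ₊] for all a ∈ g₀^{Λ₀} if and only if YM1(Λ₊,Γ₊) = 0. -/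
/-!
Conjugating `ad x ∘ ad y` by the antilinear involution `c` conjugates its trace, so
`κ(c x, c y) = conj κ(x, y)`. Together with the ad-invariance of `κ` this gives, for `c a = a`,
`2 ⟨[a, Λ₊] | Γ₊⟩ = ⟨a | YM1(Λ₊, Γ₊)⟩`. Hence `YM1 = 0` forces orthogonality; conversely
`YM1` is itself `c`-fixed and of `ad Λ₀`-weight `2 - 2 = 0`, so it may be taken as `a`, and
then `⟨YM1 | YM1⟩ = 0` forces `YM1 = 0` because `-κ` is positive definite on `c`-fixed vectors.
-/

open ComplexConjugate

namespace Module.Basis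

variable {V ι : Type*} [AddCommGroup V] [Module ℂ V]
  (c : V →ₛₗ[starRingEnd ℂ] V) (hc : Function.Involutive c)

noncomputable def conjMap (b : Basis ι ℂ V) : Basis ι ℂ V :=
  .ofRepr
    { toFun := fun x => (b.repr (c x)).mapRange conj (map_zero _)
      invFun := fun f => c (b.repr.symm (f.mapRange conj (map_zero _)))
      map_add' := fun x y => by
        ext i
        simp
      map_smul' := fun a x => by
        ext i
        simp
      left_inv := fun x => by
        refine (congrArg c ?_).trans (hc x)
        rw [LinearEquiv.symm_apply_eq]
        ext i
        simp
      right_inv := fun f => by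
        ext i
        simp [hc _] }

variable (b : Basis ι ℂ V)

theorem conjMap_repr_apply (x : V) (i : ι) :
    (b.conjMap c hc).repr x i = conj (b.repr (c x) i) := by
  simp [conjMap]

theorem conjMap_apply (i : ι) : b.conjMap c hc i = c (b i) := by
  simp [conjMap, Basis.coe_ofRepr]

end Module.Basis

theorem LinearMap.trace_eq_conj_trace {V : Type*} [AddCommGroup V] [Module ℂ V]
    [Module.Finite ℂ V] (c : V →ₛₗ[starRingEnd ℂ] V) (hc : Function.Involutive c)
    (A F : V →ₗ[ℂ] V) (hF : ∀ z, F z = c (A (c z))) :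
    trace ℂ V F = conj (trace ℂ V A) := by
  let b := Module.Free.chooseBasis ℂ V
  rw [trace_eq_matrix_trace ℂ b A, trace_eq_matrix_trace ℂ (b.conjMap c hc) F,
    Matrix.trace, Matrix.trace, map_sum]
  refine Finset.sum_congr rfl fun i _ => ?_
  simp only [Matrix.diag_apply, toMatrix_apply, Module.Basis.conjMap_repr_apply,
    Module.Basis.conjMap_apply, hF, hc _]

section Conjugation

variable {L : Type*} [LieRing L] [LieAlgebra ℂ L] (c : L →ₛₗ[starRingEnd ℂ] L)
  (hc_bracket : ∀ x y : L, c ⁅x, y⁆ = ⁅c x, c y⁆)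

include hc_bracket in
theorem killingForm_conj [Module.Finite ℂ L] (hc : Function.Involutive c) (x y : L) :
    killingForm ℂ L (c x) (c y) = conj (killingForm ℂ L x y) := by
  rw [killingForm_apply_apply, killingForm_apply_apply]
  refine LinearMap.trace_eq_conj_trace c hc _ _ fun z => ?_
  simp only [LinearMap.comp_apply, LieAlgebra.ad_apply, hc_bracket, hc z]

/-- The paper's `YM1(Λ₊, Γ₊)`. -/
def ym1 (Λ Γ : L) : L := ⁅Λ, c Γ⁆ + ⁅c Λ, Γ⁆

include hc_bracket in
theorem conj_ym1 (hc : Function.Involutive c) (Λ Γ : L) : c (ym1 c Λ Γ) = ym1 c Λ Γ := by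
  simp only [ym1, map_add, hc_bracket, hc _, add_comm]

include hc_bracket in
theorem lie_conj_of_lie_eq_smul {Λ₀ Λ : L} {t : ℂ} (hΛ₀ : c Λ₀ = -Λ₀) (ht : conj t = t)
    (hΛ : ⁅Λ₀, Λ⁆ = t • Λ) : ⁅Λ₀, c Λ⁆ = -t • c Λ := by
  have := hc_bracket Λ₀ Λ
  rw [hΛ, map_smulₛₗ, hΛ₀, neg_lie, ht] at this
  rw [neg_smul, this, neg_neg]

include hc_bracket in
theorem lie_ym1_eq_zero {Λ₀ Λ Γ : L} {t : ℂ}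
    (hΛ₀ : c Λ₀ = -Λ₀) (ht : conj t = t)
    (hΛ : ⁅Λ₀, Λ⁆ = t • Λ) (hΓ : ⁅Λ₀, Γ⁆ = t • Γ) : ⁅Λ₀, ym1 c Λ Γ⁆ = 0 := by
  rw [ym1, lie_add, leibniz_lie Λ₀ Λ, leibniz_lie Λ₀ (c Λ), hΛ, hΓ,
    lie_conj_of_lie_eq_smul c hc_bracket hΛ₀ ht hΛ, lie_conj_of_lie_eq_smul c hc_bracket hΛ₀ ht hΓ]
  simp only [smul_lie, lie_smul, neg_smul, lie_neg, neg_lie]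
  abel

include hc_bracket in
theorem two_mul_re_killingForm_conj_lie [Module.Finite ℂ L] (hc : Function.Involutive c)
    {a : L} (ha : c a = a) (Λ Γ : L) :
    2 * (killingForm ℂ L (c ⁅a, Λ⁆) Γ).re = (killingForm ℂ L a (ym1 c Λ Γ)).re := by
  have hinv (x y z : L) : killingForm ℂ L ⁅x, y⁆ z = killingForm ℂ L x ⁅y, z⁆ :=
    LieModule.traceForm_apply_lie_apply ℂ L L x y z
  have hsymm : (killingForm ℂ L a ⁅Λ, c Γ⁆).re = (killingForm ℂ L a ⁅c Λ, Γ⁆).re := by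
    have := killingForm_conj c hc_bracket hc a ⁅c Λ, Γ⁆
    rw [ha, hc_bracket, hc Λ] at this
    rw [this, Complex.conj_re]
  rw [ym1, map_add, Complex.add_re, hsymm, hc_bracket, ha, hinv]
  ring

end Conjugation

theorem stmt12_general
    (L : Type*) [LieRing L] [LieAlgebra ℂ L] [Module.Finite ℂ L]
    (c : L → L)
    (hc_add : ∀ x y : L, c (x + y) = c x + c y)
    (hc_smul : ∀ (a : ℂ) (x : L), c (a • x) = (starRingEnd ℂ a) • c x)
    (hc_bracket : ∀ x y : L, c ⁅x, y⁆ = ⁅c x, c y⁆)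
    (hc_inv : ∀ x : L, c (c x) = x)
    (hcompact : ∀ x : L, c x = x → x ≠ 0 → (killingForm ℂ L x x).re < 0)
    (B : L → L → ℝ)
    (hB : ∀ X Y : L, B X Y = -(killingForm ℂ L (c X) Y).re)
    (Λ₀ : L) (hΛ₀c : c Λ₀ = -Λ₀)
    (Λp Γp : L)
    (hΛp : ⁅Λ₀, Λp⁆ = (2 : ℂ) • Λp)
    (hΓp : ⁅Λ₀, Γp⁆ = (2 : ℂ) • Γp) :
    (∀ a : L, c a = a → ⁅Λ₀, a⁆ = 0 → B ⁅a, Λp⁆ Γp = 0) ↔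
      ⁅Λp, c Γp⁆ + ⁅c Λp, Γp⁆ = 0 := by
  let cₛ : L →ₛₗ[starRingEnd ℂ] L := ⟨⟨c, hc_add⟩, hc_smul⟩
  have hinv : Function.Involutive cₛ := hc_inv
  have hkey (a : L) (ha : c a = a) :
      2 * B ⁅a, Λp⁆ Γp = -(killingForm ℂ L a (ym1 cₛ Λp Γp)).re := by
    rw [hB, ← two_mul_re_killingForm_conj_lie cₛ hc_bracket hinv ha, mul_neg]
    rfl
  change (∀ a : L, c a = a → ⁅Λ₀, a⁆ = 0 → B ⁅a, Λp⁆ Γp = 0) ↔ ym1 cₛ Λp Γp = 0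
  constructor
  · intro horth
    by_contra hne
    have hfix : c (ym1 cₛ Λp Γp) = ym1 cₛ Λp Γp := conj_ym1 cₛ hc_bracket hinv Λp Γp
    have hcomm : ⁅Λ₀, ym1 cₛ Λp Γp⁆ = 0 :=
      lie_ym1_eq_zero cₛ hc_bracket hΛ₀c (Complex.conj_ofNat 2) hΛp hΓp
    have := hkey _ hfix
    rw [horth _ hfix hcomm] at this
    linarith [hcompact _ hfix hne]
  · intro hym a ha _
    have := hkey a ha
    rw [hym, map_zero, Complex.zero_re] at this
    linarith

/-- For `Λ₊ ∈ V₂`, a tangent vector `Γ₊ ∈ T_{Λ₊}V₂ ≅ V₂` is orthogonal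
(for the compact-real-form inner product `⟨X|Y⟩ = −Re κ(c X, Y)`) to the vertical
space `vert_{Λ₊} = {[a,Λ₊] : a ∈ g₀^{Λ₀}}` (where `g₀^{Λ₀} = {a : c a = a, [Λ₀,a]=0}`)
if and only if `YM1(Λ₊,Γ₊) := [Λ₊, c Γ₊] + [c Λ₊, Γ₊] = 0`.  That is, the horizontal
space is exactly the kernel of the first-order Yang–Mills constraint. -/
theorem stmt12
    (L : Type*) [LieRing L] [LieAlgebra ℂ L] [Module.Finite ℂ L]
    [LieAlgebra.IsSemisimple ℂ L]
    (c : L → L)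
    (hc_add : ∀ x y : L, c (x + y) = c x + c y)
    (hc_smul : ∀ (a : ℂ) (x : L), c (a • x) = (starRingEnd ℂ a) • c x)
    (hc_bracket : ∀ x y : L, c ⁅x, y⁆ = ⁅c x, c y⁆)
    (hc_inv : ∀ x : L, c (c x) = x)
    (hcompact : ∀ x : L, c x = x → x ≠ 0 → (killingForm ℂ L x x).re < 0)
    (B : L → L → ℝ)
    (hB : ∀ X Y : L, B X Y = -(killingForm ℂ L (c X) Y).re)
    (Λ₀ : L) (hΛ₀c : c Λ₀ = -Λ₀)
    (Λp Γp : L)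
    (hΛp : ⁅Λ₀, Λp⁆ = (2 : ℂ) • Λp)
    (hΓp : ⁅Λ₀, Γp⁆ = (2 : ℂ) • Γp) :
    (∀ a : L, c a = a → ⁅Λ₀, a⁆ = 0 → B ⁅a, Λp⁆ Γp = 0) ↔
      ⁅Λp, c Γp⁆ + ⁅c Λp, Γp⁆ = 0 :=
  stmt12_general L c hc_add hc_smul hc_bracket hc_inv hcompact B hB Λ₀ hΛ₀c Λp Γp hΛp hΓp
end

section
/- Suppose X₊ ∈ V₂^{Λ₀} ∩ V₂^{Ω₀} (i.e., [Λ₀,X₊] = 2X₊ and [Ω₀,X₊] = 2X₊), with X₋ = −c(X₊), satisfies [X₊, X₋] = Λ₀, where Ω₀ = [Ω₊,Ω₋] for some Ω₊ ∈ V₂^{Λ₀} ∩ V₂^{Ω₀} forming an sl₂-triple {Ω₀,Ω₊,Ω₋} (Ω₋ = −c(Ω₊)). Then Ω₀ = Λ₀. -/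
/-- key no-go result: Suppose `X₊ ∈ V₂^{Λ₀} ∩ V₂^{Ω₀}` (so
`[Λ₀,X₊] = 2X₊` and `[Ω₀,X₊] = 2X₊`), `X₋ = −c(X₊)`, and `[X₊,X₋] = Λ₀`, where
`Ω₀ = [Ω₊,Ω₋]` for some `Ω₊ ∈ V₂^{Λ₀} ∩ V₂^{Ω₀}` forming an sl₂-triple `{Ω₀,Ω₊,Ω₋}`
with `Ω₋ = −c(Ω₊)`.  Then `Ω₀ = Λ₀`. -/
theorem stmt16
    (L : Type*) [LieRing L] [LieAlgebra ℂ L] [Module.Finite ℂ L]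
    [LieAlgebra.IsSemisimple ℂ L]
    (c : L → L)
    (hc_add : ∀ x y : L, c (x + y) = c x + c y)
    (hc_smul : ∀ (a : ℂ) (x : L), c (a • x) = (starRingEnd ℂ a) • c x)
    (hc_bracket : ∀ x y : L, c ⁅x, y⁆ = ⁅c x, c y⁆)
    (hc_inv : ∀ x : L, c (c x) = x)
    (hcompact : ∀ x : L, c x = x → x ≠ 0 → (killingForm ℂ L x x).re < 0)
    (Λ₀ Ω₀ Xp Xm Ωp Ωm : L)
    (hΛ₀c : c Λ₀ = -Λ₀)
    (hΩ₀c : c Ω₀ = -Ω₀)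
    (hXm : Xm = -(c Xp))
    (hΩm : Ωm = -(c Ωp))
    (hXpΛ : ⁅Λ₀, Xp⁆ = (2 : ℂ) • Xp)
    (hXpΩ : ⁅Ω₀, Xp⁆ = (2 : ℂ) • Xp)
    (hXsol : ⁅Xp, Xm⁆ = Λ₀)
    (hΩpΛ : ⁅Λ₀, Ωp⁆ = (2 : ℂ) • Ωp)
    (hΩpΩ : ⁅Ω₀, Ωp⁆ = (2 : ℂ) • Ωp)
    (hΩ₀def : ⁅Ωp, Ωm⁆ = Ω₀) :
    Ω₀ = Λ₀ := by
  set B := killingForm ℂ L with hB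
  have inv : ∀ x y z : L, B ⁅x, y⁆ z = B x ⁅y, z⁆ :=
    fun x y z => LieModule.traceForm_apply_lie_apply ℂ L L x y z
  have comm : ∀ x y : L, B x y = B y x := fun x y => LieModule.traceForm_comm ℂ L L x y
  -- B Λ₀ Λ₀ = 2 B Xp Xm
  have h1 : B Λ₀ Λ₀ = 2 * B Xp Xm := by
    calc B Λ₀ Λ₀ = B Λ₀ ⁅Xp, Xm⁆ := by rw [hXsol]
    _ = B ⁅Λ₀, Xp⁆ Xm := (inv Λ₀ Xp Xm).symm
    _ = 2 * B Xp Xm := by rw [hXpΛ]; simp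
  have h2 : B Ω₀ Λ₀ = 2 * B Xp Xm := by
    calc B Ω₀ Λ₀ = B Ω₀ ⁅Xp, Xm⁆ := by rw [hXsol]
    _ = B ⁅Ω₀, Xp⁆ Xm := (inv Ω₀ Xp Xm).symm
    _ = 2 * B Xp Xm := by rw [hXpΩ]; simp
  have h3 : B Λ₀ Ω₀ = 2 * B Ωp Ωm := by
    calc B Λ₀ Ω₀ = B Λ₀ ⁅Ωp, Ωm⁆ := by rw [hΩ₀def]
    _ = B ⁅Λ₀, Ωp⁆ Ωm := (inv Λ₀ Ωp Ωm).symm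
    _ = 2 * B Ωp Ωm := by rw [hΩpΛ]; simp
  have h4 : B Ω₀ Ω₀ = 2 * B Ωp Ωm := by
    calc B Ω₀ Ω₀ = B Ω₀ ⁅Ωp, Ωm⁆ := by rw [hΩ₀def]
    _ = B ⁅Ω₀, Ωp⁆ Ωm := (inv Ω₀ Ωp Ωm).symm
    _ = 2 * B Ωp Ωm := by rw [hΩpΩ]; simp
  set d := Ω₀ - Λ₀ with hd
  have hBdd : B d d = 0 := by
    have : B d d = B Ω₀ Ω₀ - B Ω₀ Λ₀ - B Λ₀ Ω₀ + B Λ₀ Λ₀ := by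
      simp [hd, map_sub, LinearMap.sub_apply]; ring
    rw [this, h1, h2, h3, h4]; ring
  have hcd : c d = -d := by
    have hneg : ∀ x : L, c (-x) = -(c x) := by
      intro x
      have := hc_smul (-1) x
      simpa using this
    have : c d = c Ω₀ + c (-Λ₀) := by rw [hd, sub_eq_add_neg, hc_add]
    rw [this, hneg, hΛ₀c, hΩ₀c, hd]; abel
  set e := (Complex.I : ℂ) • d with he
  have hce : c e = e := by
    rw [he, hc_smul]
    simp [hcd, Complex.conj_I]
  have hBee : B e e = 0 := by
    rw [he]
    simp only [map_smul, LinearMap.smul_apply, hBdd, smul_eq_mul]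
    ring
  have he0 : e = 0 := by
    by_contra hne
    have := hcompact e hce hne
    rw [hBee] at this
    simp at this
  have hd0 : d = 0 := by
    rcases smul_eq_zero.mp (he ▸ he0) with h | h
    · exact absurd h Complex.I_ne_zero
    · exact h
  have := sub_eq_zero.mp (hd ▸ hd0)
  exact this
end

section
/- With {Ω₀,Ω₊,Ω₋} an sl₂-triple and Λ₀ such that [Λ₀,Ω₊] = 2Ω₊, [Λ₀,Ω₋] = −2Ω₋: ⟨Ω₀ | Λ₀⟩ = ‖Ω₀‖², where ⟨·|·⟩ is the compact-real-form inner product. Consequently, writing Ω₀ = (‖Ω₀‖²/‖Λ₀‖²)Λ₀ + (terms orthogonal to Λ₀), one obtains ‖Ω₀‖² ≤ ‖Λ₀‖², with equality forcing Ω₀ to be a multiple of Λ₀. -/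
/-- With `{Ω₀,Ω₊,Ω₋}` an sl₂-triple (`Ω₋ = −c(Ω₊)`) and `Λ₀` satisfying
`[Λ₀,Ω₊] = 2Ω₊`, `[Λ₀,Ω₋] = −2Ω₋`, one has `⟨Ω₀|Λ₀⟩ = ‖Ω₀‖²` for the
compact-real-form inner product `⟨X|Y⟩ = −Re κ(c X, Y)`.  Consequently
`‖Ω₀‖² ≤ ‖Λ₀‖²`, and equality forces `Ω₀` to be a (real) multiple of `Λ₀`. -/
theorem stmt17
    (L : Type*) [LieRing L] [LieAlgebra ℂ L] [Module.Finite ℂ L]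
    [LieAlgebra.IsSemisimple ℂ L]
    (c : L → L)
    (hc_add : ∀ x y : L, c (x + y) = c x + c y)
    (hc_smul : ∀ (a : ℂ) (x : L), c (a • x) = (starRingEnd ℂ a) • c x)
    (hc_bracket : ∀ x y : L, c ⁅x, y⁆ = ⁅c x, c y⁆)
    (hc_inv : ∀ x : L, c (c x) = x)
    (hcompact : ∀ x : L, c x = x → x ≠ 0 → (killingForm ℂ L x x).re < 0)
    (B : L → L → ℝ)
    (hB : ∀ X Y : L, B X Y = -(killingForm ℂ L (c X) Y).re)
    (Λ₀ Ω₀ Ωp Ωm : L)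
    (hΛ₀c : c Λ₀ = -Λ₀)
    (hΩm : Ωm = -(c Ωp))
    (h1 : ⁅Ω₀, Ωp⁆ = (2 : ℂ) • Ωp)
    (h2 : ⁅Ω₀, Ωm⁆ = (-2 : ℂ) • Ωm)
    (h3 : ⁅Ωp, Ωm⁆ = Ω₀)
    (hΛp : ⁅Λ₀, Ωp⁆ = (2 : ℂ) • Ωp)
    (hΛm : ⁅Λ₀, Ωm⁆ = (-2 : ℂ) • Ωm) :
    B Ω₀ Λ₀ = B Ω₀ Ω₀ ∧
    B Ω₀ Ω₀ ≤ B Λ₀ Λ₀ ∧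
    (B Ω₀ Ω₀ = B Λ₀ Λ₀ → ∃ t : ℝ, Ω₀ = (t : ℂ) • Λ₀) := by
  set κ := killingForm ℂ L with hκ
  -- basic properties of c
  have hc_neg : ∀ x : L, c (-x) = -(c x) := by
    intro x
    have := hc_smul (-1) x
    simpa using this
  have hc_sub : ∀ x y : L, c (x - y) = c x - c y := by
    intro x y
    rw [sub_eq_add_neg, hc_add, hc_neg, sub_eq_add_neg]
  -- c Ωp = -Ωm, c Ωm = -Ωp
  have hcΩp : c Ωp = -Ωm := by rw [hΩm, neg_neg]
  have hcΩm : c Ωm = -Ωp := by rw [hΩm, hc_neg, hc_inv]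
  -- c Ω₀ = -Ω₀
  have hcΩ₀ : c Ω₀ = -Ω₀ := by
    rw [← h3, hc_bracket, hcΩp, hcΩm, neg_lie, lie_neg, neg_neg, ← lie_skew]
  -- key equality: κ Ω₀ Λ₀ = κ Ω₀ Ω₀ (both equal 2 κ Ωp Ωm)
  have keyΛ : κ Ω₀ Λ₀ = (2 : ℂ) * κ Ωp Ωm := by
    rw [← h3, hκ, LieModule.traceForm_apply_lie_apply]
    have : ⁅Ωm, Λ₀⁆ = (2 : ℂ) • Ωm := by
      rw [← lie_skew, hΛm]; simp
    rw [this]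
    simp
  have keyΩ : κ Ω₀ Ω₀ = (2 : ℂ) * κ Ωp Ωm := by
    nth_rewrite 1 [← h3]
    rw [hκ, LieModule.traceForm_apply_lie_apply]
    have : ⁅Ωm, Ω₀⁆ = (2 : ℂ) • Ωm := by
      rw [← lie_skew, h2]; simp
    rw [this]
    simp
  have key : κ Ω₀ Λ₀ = κ Ω₀ Ω₀ := by rw [keyΛ, keyΩ]
  -- positivity of B
  have hpos : ∀ x : L, 0 ≤ B x x ∧ (B x x = 0 → x = 0) := by
    intro x
    set u := (2 : ℂ)⁻¹ • (x + c x) with hu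
    set v := (2 : ℂ)⁻¹ • (x - c x) with hv
    have hconj_half : (starRingEnd ℂ) ((2 : ℂ)⁻¹) = (2 : ℂ)⁻¹ := by
      rw [map_inv₀, Complex.conj_ofNat]
    have hcu : c u = u := by
      rw [hu, hc_smul, hconj_half, hc_add, hc_inv, add_comm]
    have hcv : c v = -v := by
      rw [hv, hc_smul, hconj_half, hc_sub, hc_inv]
      module
    have hx : x = u + v := by
      rw [hu, hv, smul_add, smul_sub]
      module
    have hcx : c x = u - v := by
      rw [hx, hc_add, hcu, hcv, sub_eq_add_neg]
    have hexp : B x x = -(κ u u).re + (κ v v).re := by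
      rw [hB, hcx]
      conv_lhs => rw [hx]
      rw [map_sub, LinearMap.sub_apply, map_add, map_add, LieModule.traceForm_comm ℂ L L v u]
      simp [Complex.add_re, Complex.sub_re]
      ring
    have h1u : 0 ≤ -(κ u u).re ∧ (-(κ u u).re = 0 → u = 0) := by
      by_cases hu0 : u = 0
      · simp [hu0]
      · have := hcompact u hcu hu0
        constructor
        · linarith
        · intro h; linarith
    have h1v : 0 ≤ (κ v v).re ∧ ((κ v v).re = 0 → v = 0) := by
      by_cases hv0 : v = 0
      · simp [hv0]
      · have hw : c (Complex.I • v) = Complex.I • v := by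
          rw [hc_smul, hcv]
          simp
        have hwne : Complex.I • v ≠ 0 := smul_ne_zero Complex.I_ne_zero hv0
        have := hcompact _ hw hwne
        have hww : κ (Complex.I • v) (Complex.I • v) = -(κ v v) := by
          simp only [map_smul, LinearMap.smul_apply, smul_smul, Complex.I_mul_I,
            smul_eq_mul, neg_one_mul, neg_smul, one_smul]
          rw [← mul_assoc, Complex.I_mul_I, neg_one_mul]
        rw [hww] at this
        simp only [Complex.neg_re, neg_neg] at this
        constructor
        · linarith
        · intro h; linarith
    constructor
    · rw [hexp]; linarith [h1u.1, h1v.1]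
    · intro h
      rw [hexp] at h
      have hu0 : u = 0 := h1u.2 (by linarith [h1u.1, h1v.1])
      have hv0 : v = 0 := h1v.2 (by linarith [h1u.1, h1v.1])
      rw [hx, hu0, hv0, add_zero]
  -- first claim
  have hBΩΛ : B Ω₀ Λ₀ = (κ Ω₀ Λ₀).re := by
    rw [hB, hcΩ₀, map_neg, LinearMap.neg_apply, Complex.neg_re, neg_neg]
  have hBΩΩ : B Ω₀ Ω₀ = (κ Ω₀ Ω₀).re := by
    rw [hB, hcΩ₀, map_neg, LinearMap.neg_apply, Complex.neg_re, neg_neg]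
  have hBΛΛ : B Λ₀ Λ₀ = (κ Λ₀ Λ₀).re := by
    rw [hB, hΛ₀c, map_neg, LinearMap.neg_apply, Complex.neg_re, neg_neg]
  have claim1 : B Ω₀ Λ₀ = B Ω₀ Ω₀ := by rw [hBΩΛ, hBΩΩ, key]
  -- difference
  have hcD : c (Ω₀ - Λ₀) = -(Ω₀ - Λ₀) := by
    rw [hc_sub, hcΩ₀, hΛ₀c, neg_sub_neg, neg_sub]
  have hDD : B (Ω₀ - Λ₀) (Ω₀ - Λ₀) = B Λ₀ Λ₀ - B Ω₀ Ω₀ := by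
    have e1 : κ (Ω₀ - Λ₀) (Ω₀ - Λ₀)
        = κ Ω₀ Ω₀ - κ Ω₀ Λ₀ - (κ Λ₀ Ω₀ - κ Λ₀ Λ₀) := by
      simp only [map_sub, LinearMap.sub_apply]
      ring
    have e2 : κ Λ₀ Ω₀ = κ Ω₀ Ω₀ := by
      rw [hκ, LieModule.traceForm_comm ℂ L L Λ₀ Ω₀, ← hκ, key]
    rw [hB, hcD, map_neg, LinearMap.neg_apply, Complex.neg_re, neg_neg]
    rw [e1, e2, key, hBΛΛ, hBΩΩ]
    simp only [Complex.sub_re]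
    ring
  refine ⟨claim1, ?_, ?_⟩
  · have := (hpos (Ω₀ - Λ₀)).1
    linarith [hDD ▸ this]
  · intro heq
    have hz : B (Ω₀ - Λ₀) (Ω₀ - Λ₀) = 0 := by rw [hDD, heq, sub_self]
    have := (hpos (Ω₀ - Λ₀)).2 hz
    refine ⟨1, ?_⟩
    have hΩΛ : Ω₀ = Λ₀ := by
      have := sub_eq_zero.mp this
      exact this
    rw [hΩΛ]
    norm_num
end

section
/- For an Abelian model (residual algebra g₀^{Λ₀} = h₀, the compact Cartan), there are no eigenvalues of A of the form mk − k² + m/2 with m > 2k: every highest weight vector μ (for the sl₂-triple {Ω₀,Ω₊,Ω₋}) of even Λ₀-weight whose lowering Ω₋^{k}·μ lands in the zero Λ₀-eigenspace must lie in the Cartan subalgebra, hence has Ω₀-weight zero at that level, forcing m = 2k. -/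
/-- For an Abelian model (the centralizer of `Λ₀` in `g` is the Cartan
subalgebra, hence abelian), there are no eigenvalues of `A` of the form
`mk − k² + m/2` with `m > 2k`: if `μ` is a highest weight vector for the sl₂-triple
`{Ω₀,Ω₊,Ω₋}` of `Ω₀`-weight `m`, and its `k`-fold lowering `ad_{Ω₋}^k μ` is nonzero
and lands in the zero `Λ₀`-eigenspace (hence in the abelian centralizer of `Λ₀`,
which contains `Ω₀`), then `m = 2k`. -/
theorem stmt18
    (L : Type*) [LieRing L] [LieAlgebra ℂ L] [Module.Finite ℂ L]
    [LieAlgebra.IsSemisimple ℂ L]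
    (Λ₀ Ω₀ Ωp Ωm : L)
    (habelian : ∀ x y : L, ⁅Λ₀, x⁆ = 0 → ⁅Λ₀, y⁆ = 0 → ⁅x, y⁆ = 0)
    (hΩ₀Λ₀ : ⁅Λ₀, Ω₀⁆ = 0)
    (h1 : ⁅Ω₀, Ωp⁆ = (2 : ℂ) • Ωp)
    (h2 : ⁅Ω₀, Ωm⁆ = (-2 : ℂ) • Ωm)
    (h3 : ⁅Ωp, Ωm⁆ = Ω₀)
    (hΩpV2 : ⁅Λ₀, Ωp⁆ = (2 : ℂ) • Ωp)
    (hΩmV2 : ⁅Λ₀, Ωm⁆ = (-2 : ℂ) • Ωm)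
    (m k : ℕ) (μ : L)
    (hhw : ⁅Ωp, μ⁆ = 0)
    (hwt : ⁅Ω₀, μ⁆ = (m : ℂ) • μ)
    (hne : ((LieAlgebra.ad ℂ L Ωm) ^ k) μ ≠ 0)
    (hlow : ⁅Λ₀, ((LieAlgebra.ad ℂ L Ωm) ^ k) μ⁆ = 0) :
    m = 2 * k := by
  -- weight of the k-fold lowering
  have hwtk : ∀ n : ℕ, ⁅Ω₀, ((LieAlgebra.ad ℂ L Ωm) ^ n) μ⁆ =
      ((m : ℂ) - 2 * n) • ((LieAlgebra.ad ℂ L Ωm) ^ n) μ := by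
    intro n
    induction n with
    | zero => simpa using hwt
    | succ n ih =>
      have hpow : ((LieAlgebra.ad ℂ L Ωm) ^ (n + 1)) μ =
          ⁅Ωm, ((LieAlgebra.ad ℂ L Ωm) ^ n) μ⁆ := by
        rw [pow_succ']
        rfl
      rw [hpow, leibniz_lie, h2, ih]
      rw [smul_lie, lie_smul]
      match_scalars
      push_cast
      ring
  have h0 : ((m : ℂ) - 2 * k) • ((LieAlgebra.ad ℂ L Ωm) ^ k) μ = 0 := by
    rw [← hwtk k]
    exact habelian Ω₀ _ hΩ₀Λ₀ hlow
  rcases smul_eq_zero.mp h0 with h | h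
  · have : (m : ℂ) = 2 * k := by linear_combination h
    exact_mod_cast this
  · exact absurd h hne
end
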